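/- arXiv:2504.21319 — 9 statements merged into one kernel-verified Lean document; each statement's English description precedes it below -/
import Mathlib

section
/- Let n ≥ 2 and let 1 ≤ k ≤ n−2. The number of spanning trees T of the complete graph K_n such that every neighbor of the vertex n−k in T is smaller than n−k (i.e., the number of uprooted spanning trees of K_n with root n−k) equals (n−1−k) · n^{n−2−k} · (n−1)^{k−1}. -/
/-!
Encode a tree rooted at `r` by its parent map. Deleting `r` leaves a rooted forest on the
other `n - 1` vertices whose root set `B` is the set of children of `r`, so the number of trees
in which all children of `r` lie in `S` is `∑_{B ⊆ S} F(n - 1, B)`, where `F(m, B)` counts the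
rooted forests on `m` vertices with root set `B`. Peeling off the children of the roots in the
same way gives `F(W, A) = ∑_{B ⊆ W \ A} |A|^|B| F(W \ A, B)`, hence by induction
`F(m, B) = |B| m^(m - |B| - 1)`. Both sums collapse by
`∑_j C(s, j) j x^j y^(s - j) = s x (x + y)^(s - 1)`.
-/

open Finset

theorem Nat.sum_range_choose_mul_mul_pow_mul_pow (s x y : ℕ) :
    ∑ j ∈ range (s + 1), s.choose j * j * x ^ j * y ^ (s - j) = s * x * (x + y) ^ (s - 1) := by
  rcases s with _ | t
  · simp
  rw [sum_range_succ', add_pow, mul_sum]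
  simp only [mul_zero, zero_mul, add_zero, add_tsub_cancel_right]
  refine sum_congr rfl fun i _ => ?_
  rw [Nat.add_sub_add_right, Nat.cast_id, ← Nat.add_one_mul_choose_eq]
  ring

lemma sum_powerset_pow_card_mul_card_mul_pow {α : Type*} (S : Finset α) (c m : ℕ)
    (hSm : #S ≤ m) :
    ∑ B ∈ S.powerset, c ^ #B * (#B * m ^ (m - #B)) =
      c * #S * m ^ (m - #S) * (c + m) ^ (#S - 1) := by
  rw [sum_powerset_apply_card (fun j => c ^ j * (j * m ^ (m - j)))]
  calc _ = m ^ (m - #S) * ∑ j ∈ range (#S + 1), (#S).choose j * j * c ^ j * m ^ (#S - j) := by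
        rw [mul_sum]
        refine sum_congr rfl fun j hj => ?_
        have hj : j ≤ #S := Nat.lt_succ_iff.1 (mem_range.1 hj)
        rw [smul_eq_mul, show m - j = m - #S + (#S - j) by omega, pow_add]
        ring
    _ = _ := by rw [Nat.sum_range_choose_mul_mul_pow_mul_pow]; ring

section RootedForest

variable {V : Type*} {W A B D : Finset V} {f g : V → V}

/-- A rooted forest on `W` with root set `A`, encoded by its parent map. The roots and the
vertices outside `W` are fixed points, which makes the encoding unique. -/
structure IsRootedForest (W A : Finset V) (f : V → V) : Prop where
  eq_self_of_notMem : ∀ v ∉ W, f v = v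
  eq_self_of_mem_roots : ∀ a ∈ A, f a = a
  apply_mem : ∀ v ∈ W, f v ∈ W
  exists_iterate_mem_roots : ∀ v ∈ W, ∃ k, f^[k] v ∈ A

lemma card_isRootedForest_self : Nat.card {f : V → V // IsRootedForest W W f} = 1 := by
  have hid : IsRootedForest W W id :=
    ⟨fun _ _ => rfl, fun _ _ => rfl, fun _ h => h, fun _ h => ⟨0, h⟩⟩
  refine Nat.card_eq_one_iff_exists.2
    ⟨⟨id, hid⟩, fun f => Subtype.ext <| funext fun v => ?_⟩
  by_cases hv : v ∈ W
  · exact f.2.eq_self_of_mem_roots v hv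
  · exact f.2.eq_self_of_notMem v hv

lemma isEmpty_isRootedForest_empty (hW : W.Nonempty) :
    IsEmpty {f : V → V // IsRootedForest W ∅ f} := by
  refine ⟨fun f => ?_⟩
  obtain ⟨v, hv⟩ := hW
  obtain ⟨k, hk⟩ := f.2.exists_iterate_mem_roots v hv
  exact notMem_empty _ hk

variable [DecidableEq V]

def MapsToFixingCompl (B A : Finset V) (g : V → V) : Prop :=
  (∀ v ∈ B, g v ∈ A) ∧ ∀ v ∉ B, g v = v

lemma MapsToFixingCompl.piecewise_id_eq_self (hg : MapsToFixingCompl B A g) :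
    B.piecewise g id = g := by
  ext v; by_cases hv : v ∈ B <;> simp [hv, hg.2]

lemma card_mapsToFixingCompl (B A : Finset V) :
    Nat.card {g : V → V // MapsToFixingCompl B A g} = #A ^ #B := by
  let e : {g : V → V // MapsToFixingCompl B A g} ≃ (B → A) :=
    { toFun g b := ⟨g.1 b, g.2.1 b b.2⟩
      invFun h := ⟨fun v => if hv : v ∈ B then h ⟨v, hv⟩ else v,
        fun v hv => by simp [hv], fun v hv => by simp [hv]⟩
      left_inv g := Subtype.ext <| funext fun v => by
        by_cases hv : v ∈ B <;> simp [hv, g.2.2 v]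
      right_inv h := by ext; simp }
  simp [Nat.card_congr e]

def rootChildren (W A : Finset V) (f : V → V) : Finset V := {v ∈ W \ A | f v ∈ A}

lemma mem_rootChildren {v : V} :
    v ∈ rootChildren W A f ↔ v ∈ W ∧ v ∉ A ∧ f v ∈ A := by
  simp [rootChildren, and_assoc]

lemma rootChildren_subset : rootChildren W A f ⊆ W \ A := filter_subset _ _

namespace IsRootedForest

lemma piecewise_id_eq_self (hf : IsRootedForest W B f) : B.piecewise id f = f := by
  ext v; by_cases hv : v ∈ B <;> simp [hv, hf.eq_self_of_mem_roots]

lemma sdiff_roots (hf : IsRootedForest W A f) :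
    IsRootedForest (W \ A) (rootChildren W A f) ((rootChildren W A f).piecewise id f) := by
  set B := rootChildren W A f
  have off_B : ∀ v ∈ W \ A, v ∉ B → f v ∈ W \ A := fun v hv hvB =>
    mem_sdiff.2 ⟨hf.apply_mem v (mem_sdiff.1 hv).1,
      fun hfv => hvB (mem_rootChildren.2 ⟨(mem_sdiff.1 hv).1, (mem_sdiff.1 hv).2, hfv⟩)⟩
  refine ⟨fun v hv => ?_, fun b hb => piecewise_eq_of_mem _ _ _ hb, fun v hv => ?_, ?_⟩
  · rw [piecewise_eq_of_notMem _ _ _ (fun hvB => hv (rootChildren_subset hvB))]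
    rw [mem_sdiff, not_and_not_right] at hv
    by_cases hvW : v ∈ W
    · exact hf.eq_self_of_mem_roots v (hv hvW)
    · exact hf.eq_self_of_notMem v hvW
  · by_cases hvB : v ∈ B
    · rwa [piecewise_eq_of_mem _ _ _ hvB]
    · rw [piecewise_eq_of_notMem _ _ _ hvB]; exact off_B v hv hvB
  · -- the walk from `v` to the roots passes through `B` just before it enters `A`
    suffices ∀ k, ∀ v ∈ W \ A, f^[k] v ∈ A → ∃ j, (B.piecewise id f)^[j] v ∈ B from
      fun v hv => (hf.exists_iterate_mem_roots v (mem_sdiff.1 hv).1).elim (this · v hv)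
    intro k
    induction k with
    | zero => exact fun v hv h => absurd h (mem_sdiff.1 hv).2
    | succ k ih =>
      intro v hv hk
      by_cases hvB : v ∈ B
      · exact ⟨0, hvB⟩
      obtain ⟨j, hj⟩ := ih (f v) (off_B v hv hvB) hk
      exact ⟨j + 1, by rwa [Function.iterate_succ_apply, piecewise_eq_of_notMem _ _ _ hvB]⟩

variable (hB : B ⊆ W \ A) (hg : ∀ v ∈ B, g v ∈ A) (hf : IsRootedForest (W \ A) B f)
include hB hg hf

lemma rootChildren_piecewise : rootChildren W A (B.piecewise g f) = B := by
  ext v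
  rw [mem_rootChildren]
  by_cases hvB : v ∈ B
  · simpa [hvB, hg v hvB] using mem_sdiff.1 (hB hvB)
  · rw [piecewise_eq_of_notMem _ _ _ hvB]
    simp only [hvB, iff_false, not_and]
    exact fun hvW hvA => (mem_sdiff.1 (hf.apply_mem v (mem_sdiff.2 ⟨hvW, hvA⟩))).2

lemma piecewise (hA : A ⊆ W) : IsRootedForest W A (B.piecewise g f) := by
  have hnotB : ∀ v, v ∉ W \ A → v ∉ B := fun v hv hvB => hv (hB hvB)
  refine ⟨fun v hv => ?_, fun a ha => ?_, fun v hv => ?_, fun v hv => ?_⟩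
  · have hv' : v ∉ W \ A := fun h => hv (mem_sdiff.1 h).1
    rw [piecewise_eq_of_notMem _ _ _ (hnotB v hv'), hf.eq_self_of_notMem v hv']
  · have ha' : a ∉ W \ A := fun h => (mem_sdiff.1 h).2 ha
    rw [piecewise_eq_of_notMem _ _ _ (hnotB a ha'), hf.eq_self_of_notMem a ha']
  · by_cases hvB : v ∈ B
    · rw [piecewise_eq_of_mem _ _ _ hvB]; exact hA (hg v hvB)
    rw [piecewise_eq_of_notMem _ _ _ hvB]
    by_cases hvA : v ∈ A
    · rwa [hf.eq_self_of_notMem v (fun h => (mem_sdiff.1 h).2 hvA)]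
    · exact (mem_sdiff.1 (hf.apply_mem v (mem_sdiff.2 ⟨hv, hvA⟩))).1
  · by_cases hvA : v ∈ A
    · exact ⟨0, hvA⟩
    suffices ∀ j, ∀ v ∈ W \ A, f^[j] v ∈ B → ∃ k, (B.piecewise g f)^[k] v ∈ A from
      (hf.exists_iterate_mem_roots v (mem_sdiff.2 ⟨hv, hvA⟩)).elim
        (this · v (mem_sdiff.2 ⟨hv, hvA⟩))
    have step_B : ∀ v ∈ B, (B.piecewise g f)^[1] v ∈ A := fun v hvB => by
      rw [Function.iterate_one, piecewise_eq_of_mem _ _ _ hvB]; exact hg v hvB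
    intro j
    induction j with
    | zero => exact fun v _ hvB => ⟨1, step_B v hvB⟩
    | succ j ih =>
      intro v hv hj
      by_cases hvB : v ∈ B
      · exact ⟨1, step_B v hvB⟩
      obtain ⟨k, hk⟩ := ih (f v) (hf.apply_mem v hv) hj
      exact ⟨k + 1, by rwa [Function.iterate_succ_apply, piecewise_eq_of_notMem _ _ _ hvB]⟩

end IsRootedForest

/-- A rooted forest on `W` with roots `A` is the same as the set `B` of children of the roots,
the attachment of each vertex of `B` to a root, and a rooted forest on `W \ A` with roots `B`. -/
noncomputable def rootedForestEquiv (hA : A ⊆ W) (hD : D ⊆ W \ A) :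
    {f : V → V // IsRootedForest W A f ∧ rootChildren W A f ⊆ D} ≃
    {p : Finset V × (V → V) × (V → V) // p.1 ⊆ D ∧
      MapsToFixingCompl p.1 A p.2.1 ∧ IsRootedForest (W \ A) p.1 p.2.2} where
  toFun f := ⟨(rootChildren W A f, (rootChildren W A f).piecewise f id,
      (rootChildren W A f).piecewise id f), f.2.2,
    ⟨fun v hv => by simpa [hv] using (mem_rootChildren.1 hv).2.2, fun v hv => by simp [hv]⟩,
    f.2.1.sdiff_roots⟩
  invFun p := ⟨p.1.1.piecewise p.1.2.1 p.1.2.2,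
    p.2.2.2.piecewise (p.2.1.trans hD) p.2.2.1.1 hA,
    (p.2.2.2.rootChildren_piecewise (p.2.1.trans hD) p.2.2.1.1).symm ▸ p.2.1⟩
  left_inv f := Subtype.ext (by simp [piecewise_same])
  right_inv := by
    rintro ⟨⟨B, g, f⟩, hBD, hg, hf⟩
    have hB : rootChildren W A (B.piecewise g f) = B :=
      hf.rootChildren_piecewise (hBD.trans hD) hg.1
    ext : 1
    dsimp only
    rw [hB, piecewise_idem_left, piecewise_idem_right, hg.piecewise_id_eq_self,
      hf.piecewise_id_eq_self]

theorem card_isRootedForest_rootChildren_subset [Fintype V] (hA : A ⊆ W) (hD : D ⊆ W \ A) :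
    Nat.card {f : V → V // IsRootedForest W A f ∧ rootChildren W A f ⊆ D} =
      ∑ B ∈ D.powerset, #A ^ #B * Nat.card {f : V → V // IsRootedForest (W \ A) B f} := by
  rw [Nat.card_congr ((rootedForestEquiv hA hD).trans (Equiv.subtypeProdEquivSigmaSubtype
      fun B (q : (V → V) × (V → V)) => B ⊆ D ∧ MapsToFixingCompl B A q.1 ∧
        IsRootedForest (W \ A) B q.2)),
    Nat.card_sigma, ← sum_subset (subset_univ D.powerset)]
  · refine sum_congr rfl fun B hB => ?_
    simp only [mem_powerset.1 hB, true_and]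
    rw [Nat.card_congr (Equiv.subtypeProdEquivProd (p := MapsToFixingCompl B A)),
      Nat.card_prod, card_mapsToFixingCompl]
  · intro B _ hB
    have : IsEmpty {q : (V → V) × (V → V) // B ⊆ D ∧
        MapsToFixingCompl B A q.1 ∧ IsRootedForest (W \ A) B q.2} :=
      ⟨fun q => hB (mem_powerset.2 q.2.1)⟩
    exact Nat.card_of_isEmpty

/-- The number of rooted forests is `#A * #W ^ (#W - #A - 1)`; it is stated multiplied by `#W`
because of truncated subtraction, the count being `1` when `A = W`. -/
theorem card_isRootedForest [Fintype V] (hA : A ⊆ W) :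
    #W * Nat.card {f : V → V // IsRootedForest W A f} = #A * #W ^ (#W - #A) := by
  induction W using Finset.strongInduction generalizing A with
  | H W ih =>
  rcases A.eq_empty_or_nonempty with rfl | hA₀
  · rcases W.eq_empty_or_nonempty with rfl | hW
    · simp
    · have := isEmpty_isRootedForest_empty hW
      simp
  rcases hA.eq_or_ssubset with rfl | hAW
  · simp [card_isRootedForest_self]
  set M := #(W \ A)
  have hMW : #W = #A + M := by rw [← card_sdiff_add_card_eq_card hA]; ring
  have hM₀ : 0 < M := card_pos.2 (sdiff_nonempty.2 (not_subset_of_ssubset hAW))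
  have key : M * Nat.card {f : V → V // IsRootedForest W A f} = #A * M * #W ^ (M - 1) := by
    rw [← Nat.card_congr (Equiv.subtypeEquivRight fun f =>
        and_iff_left (rootChildren_subset (f := f))),
      card_isRootedForest_rootChildren_subset hA subset_rfl, mul_sum]
    calc _ = ∑ B ∈ (W \ A).powerset, #A ^ #B * (#B * M ^ (M - #B)) := by
          refine sum_congr rfl fun B hB => ?_
          rw [mul_left_comm, ih _ (sdiff_ssubset hA hA₀) (mem_powerset.1 hB)]
      _ = _ := by
          rw [sum_powerset_pow_card_mul_card_mul_pow _ _ _ le_rfl, Nat.sub_self, pow_zero, hMW]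
          ring
  obtain ⟨M', hM'⟩ : ∃ M', M = M' + 1 := ⟨M - 1, by omega⟩
  rw [hM', mul_comm #A, mul_assoc, Nat.add_sub_cancel] at key
  rw [Nat.eq_of_mul_eq_mul_left (by omega) key, show #W - #A = M' + 1 by omega, pow_succ]
  ring

end RootedForest

namespace SimpleGraph

variable {V : Type*} {r v : V} {f g : V → V} {G T : SimpleGraph V}

def parentGraph (f : V → V) : SimpleGraph V := fromRel fun a b => f a = b

lemma parentGraph_adj {a b : V} : (parentGraph f).Adj a b ↔ a ≠ b ∧ (f a = b ∨ f b = a) :=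
  fromRel_adj _ _ _

structure IsParentMap (r : V) (f : V → V) : Prop where
  map_root : f r = r
  exists_iterate_eq_root : ∀ v, ∃ k, f^[k] v = r

namespace IsParentMap

variable (hf : IsParentMap r f)
include hf

lemma iterate_succ_ne (hv : v ≠ r) (j : ℕ) : f^[j + 1] v ≠ v := by
  intro hper
  obtain ⟨k, hk⟩ := hf.exists_iterate_eq_root v
  have hback : f^[j * k + k] v = v := by
    rw [← add_one_mul]; exact (Function.IsPeriodicPt.mul_const hper k)
  rw [Function.iterate_add_apply, hk, Function.iterate_fixed hf.map_root] at hback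
  exact hv hback.symm

lemma apply_ne (hv : v ≠ r) : f v ≠ v := hf.iterate_succ_ne hv 0

lemma parentGraph_adj_root_iff {w : V} : (parentGraph f).Adj r w ↔ w ≠ r ∧ f w = r := by
  rw [parentGraph_adj, hf.map_root]
  constructor
  · rintro ⟨hne, heq | heq⟩
    exacts [absurd heq hne, ⟨hne.symm, heq⟩]
  · rintro ⟨hne, heq⟩
    exact ⟨hne.symm, Or.inr heq⟩

lemma reachable_root (v : V) : (parentGraph f).Reachable v r := by
  obtain ⟨k, hk⟩ := hf.exists_iterate_eq_root v
  induction k generalizing v with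
  | zero => exact hk ▸ Reachable.refl v
  | succ k ih =>
    by_cases hv : v = r
    · exact hv ▸ Reachable.refl v
    exact (parentGraph_adj.2 ⟨(hf.apply_ne hv).symm, Or.inl rfl⟩).reachable.trans (ih (f v) hk)

lemma connected : (parentGraph f).Connected :=
  have : Nonempty V := ⟨r⟩
  ⟨fun u v => (hf.reachable_root u).trans (hf.reachable_root v).symm⟩

lemma edgeSet_eq : (parentGraph f).edgeSet = Set.range fun v : {v // v ≠ r} => s(v.1, f v) := by
  ext e
  induction e using Sym2.ind with
  | h a b =>
  rw [mem_edgeSet, parentGraph_adj, Set.mem_range]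
  constructor
  · rintro ⟨hab, rfl | rfl⟩
    · exact ⟨⟨a, fun h => hab (by rw [h, hf.map_root])⟩, rfl⟩
    · exact ⟨⟨b, fun h => hab (by rw [h, hf.map_root])⟩, Sym2.eq_swap⟩
  · rintro ⟨⟨v, hv⟩, he⟩
    rcases Sym2.eq_iff.1 he with ⟨rfl, rfl⟩ | ⟨rfl, rfl⟩
    exacts [⟨(hf.apply_ne hv).symm, Or.inl rfl⟩, ⟨hf.apply_ne hv, Or.inr rfl⟩]

lemma injective_edge : Function.Injective fun v : {v // v ≠ r} => s(v.1, f v) := by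
  rintro ⟨u, hu⟩ ⟨v, hv⟩ he
  rcases Sym2.eq_iff.1 he with ⟨huv, -⟩ | ⟨rfl, hfu⟩
  · exact Subtype.ext huv
  · exact absurd (by rw [Function.iterate_succ_apply, Function.iterate_one, hfu])
      (hf.iterate_succ_ne hu 1)

lemma isTree [Finite V] : (parentGraph f).IsTree := by
  have := Fintype.ofFinite V
  classical
  rw [isTree_iff_connected_and_card, hf.edgeSet_eq, Nat.card_range_of_injective hf.injective_edge]
  refine ⟨hf.connected, ?_⟩
  simpa [Nat.card_eq_fintype_card] using Nat.sub_add_cancel (Fintype.card_pos_iff.2 ⟨r⟩)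

lemma eq_of_parentGraph_eq (hg : IsParentMap r g) (h : parentGraph f = parentGraph g) : f = g := by
  funext v
  obtain ⟨k, hk⟩ := hf.exists_iterate_eq_root v
  induction k generalizing v with
  | zero => obtain rfl : v = r := hk; rw [hf.map_root, hg.map_root]
  | succ k ih =>
    by_cases hv : v = r
    · subst hv; rw [hf.map_root, hg.map_root]
    have hadj : (parentGraph g).Adj v (f v) :=
      h ▸ parentGraph_adj.2 ⟨(hf.apply_ne hv).symm, Or.inl rfl⟩
    rcases (parentGraph_adj.1 hadj).2 with hgv | hgfv
    · exact hgv.symm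
    · -- otherwise `v → f v → v` would be a cycle of `f`
      refine absurd ?_ (hf.iterate_succ_ne hv 1)
      rw [Function.iterate_succ_apply, Function.iterate_one, ih (f v) hk, hgfv]

end IsParentMap

/-- In a tree, `T.distParent r v` is the parent of `v` for the root `r`. -/
noncomputable def distParent (G : SimpleGraph V) (r v : V) : V :=
  open Classical in if h : ∃ w, G.Adj v w ∧ G.dist w r < G.dist v r then h.choose else v

lemma Reachable.exists_adj_dist_lt (h : G.Reachable v r) (hv : v ≠ r) :
    ∃ w, G.Adj v w ∧ G.dist w r < G.dist v r := by
  obtain ⟨p, hp⟩ := h.exists_walk_length_eq_dist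
  cases p with
  | nil => exact absurd rfl hv
  | cons hadj q =>
    refine ⟨_, hadj, ?_⟩
    have := dist_le q
    rw [Walk.length_cons] at hp
    omega

lemma parentGraph_distParent_le : parentGraph (G.distParent r) ≤ G := by
  have hadj : ∀ v, G.distParent r v ≠ v → G.Adj v (G.distParent r v) := fun v hv => by
    unfold distParent at hv ⊢
    split_ifs at hv ⊢ with h
    exacts [h.choose_spec.1, absurd rfl hv]
  intro a b hab
  rcases parentGraph_adj.1 hab with ⟨hne, rfl | rfl⟩
  exacts [hadj a hne.symm, (hadj b hne).symm]

lemma Connected.isParentMap_distParent (hG : G.Connected) : IsParentMap r (G.distParent r) := by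
  have hlt : ∀ v, v ≠ r → G.dist (G.distParent r v) r < G.dist v r := fun v hv => by
    have h := (hG.preconnected v r).exists_adj_dist_lt hv
    simp only [distParent, dif_pos h]
    exact h.choose_spec.2
  refine ⟨?_, fun v => ?_⟩
  · simp [distParent]
  induction hd : G.dist v r using Nat.strong_induction_on generalizing v with
  | _ d ih =>
    by_cases hv : v = r
    · exact ⟨0, hv⟩
    obtain ⟨k, hk⟩ := ih _ (hd ▸ hlt v hv) _ rfl
    exact ⟨k + 1, hk⟩

lemma IsTree.parentGraph_distParent (hT : T.IsTree) : parentGraph (T.distParent r) = T :=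
  (isTree_iff_minimal_connected.1 hT).eq_of_le hT.connected.isParentMap_distParent.connected
    parentGraph_distParent_le

noncomputable def isTreeEquivIsParentMap [Finite V] (r : V) :
    {T : SimpleGraph V // T.IsTree} ≃ {f : V → V // IsParentMap r f} where
  toFun T := ⟨T.1.distParent r, T.2.connected.isParentMap_distParent⟩
  invFun f := ⟨parentGraph f, f.2.isTree⟩
  left_inv T := Subtype.ext T.2.parentGraph_distParent
  right_inv f := Subtype.ext <|
    f.2.isTree.connected.isParentMap_distParent.eq_of_parentGraph_eq f.2
      f.2.isTree.parentGraph_distParent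

end SimpleGraph

open SimpleGraph

section Trees

variable {V : Type*} [Fintype V] {r : V} {S : Finset V} {f : V → V}

lemma isRootedForest_univ_singleton_iff : IsRootedForest univ {r} f ↔ IsParentMap r f :=
  ⟨fun hf => ⟨hf.eq_self_of_mem_roots r (mem_singleton_self r),
      fun v => by simpa using hf.exists_iterate_mem_roots v (mem_univ v)⟩,
    fun hf => ⟨fun v hv => absurd (mem_univ v) hv,
      fun a ha => (mem_singleton.1 ha) ▸ hf.map_root,
      fun v _ => mem_univ _, fun v _ => by simpa using hf.exists_iterate_eq_root v⟩⟩

variable [DecidableEq V]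

lemma rootChildren_univ_singleton_subset_iff :
    rootChildren univ {r} f ⊆ S ↔ ∀ w, w ≠ r → f w = r → w ∈ S := by
  simp [subset_iff, mem_rootChildren]

lemma card_isTree_adj_root_subset_eq_card_isRootedForest (r : V) (S : Finset V) :
    Nat.card {T : SimpleGraph V // T.IsTree ∧ ∀ w, T.Adj r w → w ∈ S} =
      Nat.card {f : V → V // IsRootedForest univ {r} f ∧ rootChildren univ {r} f ⊆ S} := by
  refine Nat.card_congr <|
    (Equiv.subtypeSubtypeEquivSubtypeInter _ (fun T => ∀ w, T.Adj r w → w ∈ S)).symm.trans <|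
    (Equiv.subtypeEquiv (isTreeEquivIsParentMap r) fun T => ?_).trans <|
    (Equiv.subtypeSubtypeEquivSubtypeInter _
      (fun f => ∀ w, w ≠ r → f w = r → w ∈ S)).trans <|
    Equiv.subtypeEquivRight fun f => by
      rw [isRootedForest_univ_singleton_iff, rootChildren_univ_singleton_subset_iff]
  have hadj : ∀ w, T.1.Adj r w ↔ w ≠ r ∧ T.1.distParent r w = r := fun w => by
    conv_lhs => rw [← T.2.parentGraph_distParent (r := r)]
    exact T.2.connected.isParentMap_distParent.parentGraph_adj_root_iff
  simp [isTreeEquivIsParentMap, hadj]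

theorem card_isTree_adj_root_subset (hrS : r ∉ S) :
    (Fintype.card V - 1) *
        Nat.card {T : SimpleGraph V // T.IsTree ∧ ∀ w, T.Adj r w → w ∈ S} =
      #S * (Fintype.card V - 1) ^ (Fintype.card V - 1 - #S) * Fintype.card V ^ (#S - 1) := by
  have hS : S ⊆ univ \ {r} := subset_sdiff.2 ⟨subset_univ S, disjoint_singleton_right.2 hrS⟩
  have hcard : #(univ \ {r}) = Fintype.card V - 1 := by
    rw [← compl_eq_univ_sdiff, card_compl, card_singleton]
  rw [card_isTree_adj_root_subset_eq_card_isRootedForest,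
    card_isRootedForest_rootChildren_subset (subset_univ _) hS, mul_sum]
  calc _ = ∑ B ∈ S.powerset,
          1 ^ #B * (#B * (Fintype.card V - 1) ^ (Fintype.card V - 1 - #B)) := by
        refine sum_congr rfl fun B hB => ?_
        rw [card_singleton, mul_left_comm, ← hcard,
          card_isRootedForest ((mem_powerset.1 hB).trans hS)]
    _ = _ := by
        rw [sum_powerset_pow_card_mul_card_mul_pow _ _ _ (hcard ▸ card_le_card hS),
          Nat.add_sub_cancel' (Fintype.card_pos_iff.2 ⟨r⟩), one_mul]

end Trees

/-- The number of uprooted spanning trees of the complete graph `K_n` with root `n - k`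
(vertex labelled `n - k`, i.e. index `n - k - 1` of `Fin n`) equals
`(n-1-k) * n^(n-2-k) * (n-1)^(k-1)`. -/
theorem uprooted_spanning_trees_Kn_root (n k : ℕ)
    (hk1 : 1 ≤ k) (hk2 : k ≤ n - 2) :
    Nat.card {T : SimpleGraph (Fin n) // T ≤ ⊤ ∧ T.IsTree ∧
        ∀ w : Fin n, T.Adj ⟨n - k - 1, by omega⟩ w → w < ⟨n - k - 1, by omega⟩} =
      (n - 1 - k) * n ^ (n - 2 - k) * (n - 1) ^ (k - 1) := by
  set r : Fin n := ⟨n - k - 1, by omega⟩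
  have hIio : #(Iio r) = n - 1 - k := by rw [Fin.card_Iio]; show n - k - 1 = _; omega
  have key := card_isTree_adj_root_subset (r := r) (S := Iio r) (by simp)
  rw [Fintype.card_fin, hIio, show n - 1 - (n - 1 - k) = (k - 1) + 1 by omega, pow_succ,
    show n - 1 - k - 1 = n - 2 - k by omega] at key
  refine (Nat.card_congr (Equiv.subtypeEquivRight fun T => by simp)).trans
    (Nat.eq_of_mul_eq_mul_left (by omega : 0 < n - 1) (key.trans ?_))
  ring
end

section
/- For every integer n ≥ 2, the identity (n−1)^n = Σ_{k=0}^{n−2} (n−1−k) · n^{n−2−k} · (n−1)^k holds (in the natural numbers). Equivalently, (n−1)^{n−1} = Σ_{k=0}^{n−1} (n−1−k) · n^{n−2−k} · (n−1)^{k−1}. -/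
private lemma cdg_aux (m : ℕ) :
    ∑ k ∈ Finset.range (m + 1), (m + 1 - k) * (m + 2) ^ (m - k) * (m + 1) ^ k
      = (m + 1) ^ (m + 2) := by
  have key : ∀ k ∈ Finset.range (m + 1),
      (m + 1 - k) * (m + 2) ^ (m - k) * (m + 1) ^ k
        = (fun k => k * (m + 2) ^ (m + 1 - k) * (m + 1) ^ k) (k + 1)
          - (fun k => k * (m + 2) ^ (m + 1 - k) * (m + 1) ^ k) k := by
    intro k hk
    simp only [Finset.mem_range] at hk
    have hk' : k ≤ m := Nat.lt_succ_iff.mp hk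
    beta_reduce
    have h1 : m + 1 - (k + 1) = m - k := by omega
    have h2 : m + 1 - k = (m - k) + 1 := by omega
    rw [h1, h2, pow_succ, pow_succ]
    have expand : (k + 1) * (m + 2) ^ (m - k) * ((m + 1) ^ k * (m + 1))
        - k * ((m + 2) ^ (m - k) * (m + 2)) * (m + 1) ^ k
        = ((k + 1) * (m + 1) - k * (m + 2)) * ((m + 2) ^ (m - k) * (m + 1) ^ k) := by
      rw [Nat.sub_mul]
      congr 1 <;> ring
    rw [expand]
    have : (k + 1) * (m + 1) - k * (m + 2) = m + 1 - k := by
      obtain ⟨d, rfl⟩ : ∃ d, m = k + d := ⟨m - k, by omega⟩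
      rw [show k + d + 1 - k = d + 1 from by omega]
      apply Nat.sub_eq_of_eq_add
      ring
    rw [this, h2]
    ring
  rw [Finset.sum_congr rfl key]
  have hmono : Monotone (fun k => k * (m + 2) ^ (m + 1 - k) * (m + 1) ^ k) := by
    apply monotone_nat_of_le_succ
    intro k
    beta_reduce
    by_cases hk : k ≤ m
    · have h1 : m + 1 - k = (m - k) + 1 := by omega
      have h2 : m + 1 - (k + 1) = m - k := by omega
      rw [h1, h2, pow_succ, pow_succ]
      have : k * ((m + 2) ^ (m - k) * (m + 2)) * (m + 1) ^ k
          = (k * (m + 2)) * ((m + 2) ^ (m - k) * (m + 1) ^ k) := by ring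
      rw [this]
      have : (k + 1) * (m + 2) ^ (m - k) * ((m + 1) ^ k * (m + 1))
          = ((k + 1) * (m + 1)) * ((m + 2) ^ (m - k) * (m + 1) ^ k) := by ring
      rw [this]
      exact Nat.mul_le_mul_right _ (by nlinarith)
    · have h1 : m + 1 - k = 0 := by omega
      have h2 : m + 1 - (k + 1) = 0 := by omega
      rw [h1, h2]
      simp only [pow_zero, mul_one, pow_succ]
      calc k * (m + 1) ^ k ≤ (k + 1) * (m + 1) ^ k :=
            Nat.mul_le_mul_right _ (Nat.le_succ k)
        _ ≤ (k + 1) * ((m + 1) ^ k * (m + 1)) := by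
            rw [← mul_assoc]
            exact Nat.le_mul_of_pos_right _ (Nat.succ_pos m)
  rw [Finset.sum_range_tsub hmono]
  simp only [Nat.sub_self, pow_zero, Nat.zero_mul, Nat.mul_zero, zero_mul, Nat.sub_zero]
  rw [pow_succ]
  ring

/-- Chauve–Dulucq–Guibert identity: `(n-1)^n = Σ_{k=0}^{n-2} (n-1-k) n^(n-2-k) (n-1)^k`. -/
theorem chauve_dulucq_guibert_identity (n : ℕ) (hn : 2 ≤ n) :
    (n - 1) ^ n =
      ∑ k ∈ Finset.range (n - 1), (n - 1 - k) * n ^ (n - 2 - k) * (n - 1) ^ k := by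
  obtain ⟨m, rfl⟩ : ∃ m, n = m + 2 := ⟨n - 2, by omega⟩
  have h1 : m + 2 - 1 = m + 1 := by omega
  have h2 : ∀ k, m + 2 - 2 - k = m - k := fun k => by omega
  simp only [h1, h2]
  exact (cdg_aux m).symm
end

section
/- For all integers m ≥ 1 and n ≥ 2, the identity m^{n−1} · n^m = Σ_{k=1}^{m} m^{n−2} · n^{m−k} · (n−1)^{k−1} · (m+n−k) holds (in the natural numbers). Equivalently, m^{n−1} · n^{m−1} = Σ_{k=1}^{m} m^{n−2} · n^{m−k−1} · (n−1)^{k−1} · (m+n−k). -/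
lemma geom_aux (n : ℕ) (hn : 1 ≤ n) (m : ℕ) :
    (∑ k ∈ Finset.Icc 1 m, n ^ (m - k) * (n - 1) ^ (k - 1)) + (n - 1) ^ m = n ^ m := by
  induction m with
  | zero => simp
  | succ m ih =>
    rw [Finset.sum_Icc_succ_top (by omega)]
    have h1 : ∑ k ∈ Finset.Icc 1 m, n ^ (m + 1 - k) * (n - 1) ^ (k - 1)
        = n * ∑ k ∈ Finset.Icc 1 m, n ^ (m - k) * (n - 1) ^ (k - 1) := by
      rw [Finset.mul_sum]
      refine Finset.sum_congr rfl fun k hk => ?_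
      simp only [Finset.mem_Icc] at hk
      have : m + 1 - k = (m - k) + 1 := by omega
      rw [this, pow_succ]
      ring
    rw [h1]
    simp only [Nat.add_sub_cancel, Nat.sub_self, pow_zero, one_mul]
    set s := ∑ k ∈ Finset.Icc 1 m, n ^ (m - k) * (n - 1) ^ (k - 1) with hs
    have hb : n - 1 + 1 = n := by omega
    calc n * s + (n - 1) ^ m + (n - 1) ^ (m + 1)
        = n * s + (n - 1 + 1) * (n - 1) ^ m := by ring
      _ = n * s + n * (n - 1) ^ m := by rw [hb]
      _ = n * (s + (n - 1) ^ m) := by ring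
      _ = n * n ^ m := by rw [ih]
      _ = n ^ (m + 1) := by ring

lemma main_aux (n : ℕ) (hn : 1 ≤ n) (m : ℕ) :
    (∑ k ∈ Finset.Icc 1 m, n ^ (m - k) * (n - 1) ^ (k - 1) * (m + n - k)) = m * n ^ m := by
  induction m with
  | zero => simp
  | succ m ih =>
    rw [Finset.sum_Icc_succ_top (by omega)]
    have h1 : ∑ k ∈ Finset.Icc 1 m, n ^ (m + 1 - k) * (n - 1) ^ (k - 1) * (m + 1 + n - k)
        = (n * ∑ k ∈ Finset.Icc 1 m, n ^ (m - k) * (n - 1) ^ (k - 1) * (m + n - k))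
          + n * ∑ k ∈ Finset.Icc 1 m, n ^ (m - k) * (n - 1) ^ (k - 1) := by
      rw [Finset.mul_sum, Finset.mul_sum, ← Finset.sum_add_distrib]
      refine Finset.sum_congr rfl fun k hk => ?_
      simp only [Finset.mem_Icc] at hk
      have e1 : m + 1 - k = (m - k) + 1 := by omega
      have e2 : m + 1 + n - k = (m + n - k) + 1 := by omega
      rw [e1, e2, pow_succ]
      ring
    rw [h1, ih]
    have e3 : m + 1 - (m + 1) = 0 := by omega
    have e4 : m + 1 + n - (m + 1) = n := by omega
    rw [e3, e4]
    simp only [pow_zero, one_mul, Nat.add_sub_cancel]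
    have hg := geom_aux n hn m
    set s := ∑ k ∈ Finset.Icc 1 m, n ^ (m - k) * (n - 1) ^ (k - 1) with hs
    calc n * (m * n ^ m) + n * s + (n - 1) ^ m * n
        = m * n ^ (m + 1) + n * (s + (n - 1) ^ m) := by ring
      _ = m * n ^ (m + 1) + n * n ^ m := by rw [hg]
      _ = (m + 1) * n ^ (m + 1) := by ring

/-- Identity for the spanning tree count of `K_{m,n}`:
`m^(n-1) n^m = Σ_{k=1}^m m^(n-2) n^(m-k) (n-1)^(k-1) (m+n-k)`. -/
theorem bipartite_spanning_tree_identity (m n : ℕ) (hm : 1 ≤ m) (hn : 2 ≤ n) :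
    m ^ (n - 1) * n ^ m =
      ∑ k ∈ Finset.Icc 1 m,
        m ^ (n - 2) * n ^ (m - k) * (n - 1) ^ (k - 1) * (m + n - k) := by
  have hsum := main_aux n (by omega) m
  have hRHS : ∑ k ∈ Finset.Icc 1 m,
      m ^ (n - 2) * n ^ (m - k) * (n - 1) ^ (k - 1) * (m + n - k)
      = m ^ (n - 2) * ∑ k ∈ Finset.Icc 1 m,
          n ^ (m - k) * (n - 1) ^ (k - 1) * (m + n - k) := by
    rw [Finset.mul_sum]
    refine Finset.sum_congr rfl fun k hk => by ring
  rw [hRHS, hsum]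
  have e : n - 1 = (n - 2) + 1 := by omega
  rw [e, pow_succ]
  ring
end

section
/- For all integers n ≥ 2 and 0 ≤ k ≤ n−1, the identity (n−1−k) · n^{n−1−k} · (n−1)^k = Σ_{j=1}^{n−k−1} n^{n−k−j−1} · (n−1)^{k+j−1} · (2n−k−j−1) holds (in the natural numbers). Equivalently, (n−1−k) · n^{n−2−k} · (n−1)^{k−1} = Σ_{j=1}^{n−k−1} n^{n−k−j−2} · (n−1)^{k+j−2} · (2n−k−j−1). -/
lemma refined_root_aux (a : ℕ) : ∀ m k : ℕ,
    m * (a + 1) ^ m * a ^ k =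
      ∑ i ∈ Finset.range m, (a + 1) ^ (m - 1 - i) * a ^ (k + i) * (a + m - i) := by
  intro m
  induction m with
  | zero => simp
  | succ m ih =>
    intro k
    rw [Finset.sum_range_succ']
    have h1 : ∑ i ∈ Finset.range m,
        (a + 1) ^ (m + 1 - 1 - (i + 1)) * a ^ (k + (i + 1)) * (a + (m + 1) - (i + 1)) =
        ∑ i ∈ Finset.range m, (a + 1) ^ (m - 1 - i) * a ^ ((k + 1) + i) * (a + m - i) := by
      apply Finset.sum_congr rfl
      intro i hi
      have hi' := Finset.mem_range.mp hi
      have e1 : m + 1 - 1 - (i + 1) = m - 1 - i := by omega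
      have e2 : k + (i + 1) = (k + 1) + i := by omega
      have e3 : a + (m + 1) - (i + 1) = a + m - i := by omega
      rw [e1, e2, e3]
    rw [h1, ← ih (k + 1)]
    have h2 : m + 1 - 1 - 0 = m := by omega
    have h3 : a + (m + 1) - 0 = a + m + 1 := by omega
    rw [h2, h3]
    ring

/-- Refinement identity: `(n-1-k) n^(n-1-k) (n-1)^k
= Σ_{j=1}^{n-k-1} n^(n-k-j-1) (n-1)^(k+j-1) (2n-k-j-1)`. -/
theorem refined_root_identity (n k : ℕ) (hn : 2 ≤ n) (hk : k ≤ n - 1) :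
    (n - 1 - k) * n ^ (n - 1 - k) * (n - 1) ^ k =
      ∑ j ∈ Finset.Icc 1 (n - k - 1),
        n ^ (n - k - j - 1) * (n - 1) ^ (k + j - 1) * (2 * n - k - j - 1) := by
  set a := n - 1 with ha
  set m := n - 1 - k with hm
  have hna : n = a + 1 := by omega
  have hIcc : n - k - 1 = m := by omega
  rw [hIcc, ← Finset.Ico_add_one_right_eq_Icc, Finset.sum_Ico_eq_sum_range]
  have hrange : m + 1 - 1 = m := by omega
  rw [hrange]
  rw [hna, refined_root_aux a m k]
  apply Finset.sum_congr rfl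
  intro i hi
  have hi' := Finset.mem_range.mp hi
  have e1 : a + 1 - k - (1 + i) - 1 = m - 1 - i := by omega
  have e2 : k + (1 + i) - 1 = k + i := by omega
  have e3 : 2 * (a + 1) - k - (1 + i) - 1 = a + m - i := by omega
  rw [e1, e2, e3]
end

section
/- For every integer n ≥ 2, the identity n · (n−1)^n = Σ_{k=0}^{n−1} Σ_{j=1}^{n−k−1} n^{n−k−j−1} · (n−1)^{k+j−1} · (2n−k−j−1) holds (in the natural numbers). Equivalently, (n−1)^{n−1} = Σ_{k=0}^{n−1} Σ_{j=1}^{n−k−1} n^{n−k−j−2} · (n−1)^{k+j−2} · (2n−k−j−1). -/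
open Finset

/-- Double-sum refinement identity:
`n (n-1)^n = Σ_{k=0}^{n-1} Σ_{j=1}^{n-k-1} n^(n-k-j-1) (n-1)^(k+j-1) (2n-k-j-1)`. -/
theorem double_sum_refinement_identity (n : ℕ) (hn : 2 ≤ n) :
    n * (n - 1) ^ n =
      ∑ k ∈ Finset.range n, ∑ j ∈ Finset.Icc 1 (n - k - 1),
        n ^ (n - k - j - 1) * (n - 1) ^ (k + j - 1) * (2 * n - k - j - 1) := by
  have h1 : 1 ≤ n := by omega
  -- integer-valued summand depending only on m = k + j
  set g : ℕ → ℤ := fun m =>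
    (n : ℤ) ^ (n - m - 1) * ((n : ℤ) - 1) ^ (m - 1) * (2 * (n : ℤ) - m - 1) with hg
  set U : ℕ → ℤ := fun m =>
    (m : ℤ) * ((m : ℤ) - 1) * (n : ℤ) ^ (n - m) * ((n : ℤ) - 1) ^ (m - 1) with hU
  have key : (∑ k ∈ range n, ∑ j ∈ Icc 1 (n - k - 1), g (k + j))
      = (n : ℤ) * ((n : ℤ) - 1) ^ n := by
    -- reindex inner sum: m = k + j
    have step1 : ∀ k ∈ range n,
        (∑ j ∈ Icc 1 (n - k - 1), g (k + j)) = ∑ m ∈ Icc (k + 1) (n - 1), g m := by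
      intro k hk
      simp only [mem_range] at hk
      have : Icc (k + 1) (n - 1) = (Icc 1 (n - k - 1)).map (addLeftEmbedding k) := by
        rw [map_add_left_Icc]
        congr 1
        omega
      rw [this, Finset.sum_map]
      rfl
    rw [Finset.sum_congr rfl step1]
    -- swap summation order
    have step2 : (∑ k ∈ range n, ∑ m ∈ Icc (k + 1) (n - 1), g m)
        = ∑ m ∈ range n, ∑ k ∈ range m, g m := by
      apply Finset.sum_comm'
      intro k m
      simp only [mem_range, mem_Icc]
      omega
    rw [step2]
    have step3 : ∀ m ∈ range n, (∑ k ∈ range m, g m) = U (m + 1) - U m := by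
      intro m hm
      simp only [mem_range] at hm
      rw [Finset.sum_const, Finset.card_range, nsmul_eq_mul]
      rcases m with _ | m
      · simp [hU]
      · -- 1 ≤ m + 1 ≤ n - 1
        have ha : n - (m + 1) - 1 = n - (m + 2) := by omega
        have hb : n - (m + 1) = n - (m + 2) + 1 := by omega
        simp only [hg, hU, ha, hb, Nat.add_sub_cancel]
        push_cast
        ring
    rw [Finset.sum_congr rfl step3, Finset.sum_range_sub U n]
    have h0 : U 0 = 0 := by simp [hU]
    have hUn : U n = (n : ℤ) * ((n : ℤ) - 1) ^ n := by
      have hpow : ((n : ℤ) - 1) ^ n = ((n : ℤ) - 1) * ((n : ℤ) - 1) ^ (n - 1) := by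
        rw [show ((n : ℤ) - 1) ^ n = ((n : ℤ) - 1) ^ ((n - 1) + 1) by
          rw [Nat.sub_add_cancel h1], pow_succ]
        ring
      simp only [hU, Nat.sub_self, pow_zero, hpow]
      ring
    rw [h0, hUn, sub_zero]
  -- cast the natural-number statement to ℤ
  have cast_eq :
      ((∑ k ∈ range n, ∑ j ∈ Icc 1 (n - k - 1),
        n ^ (n - k - j - 1) * (n - 1) ^ (k + j - 1) * (2 * n - k - j - 1) : ℕ) : ℤ)
      = ∑ k ∈ range n, ∑ j ∈ Icc 1 (n - k - 1), g (k + j) := by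
    push_cast
    refine Finset.sum_congr rfl fun k hk => Finset.sum_congr rfl fun j hj => ?_
    simp only [mem_range] at hk
    simp only [mem_Icc] at hj
    have e1 : ((n - 1 : ℕ) : ℤ) = (n : ℤ) - 1 := by omega
    have e2 : ((2 * n - k - j - 1 : ℕ) : ℤ) = 2 * (n : ℤ) - k - j - 1 := by omega
    have e3 : n - k - j - 1 = n - (k + j) - 1 := by omega
    simp only [hg, e1, e2, e3]
    push_cast
    ring
  have := cast_eq.trans key
  have goal : ((n * (n - 1) ^ n : ℕ) : ℤ)
      = ((∑ k ∈ range n, ∑ j ∈ Icc 1 (n - k - 1),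
        n ^ (n - k - j - 1) * (n - 1) ^ (k + j - 1) * (2 * n - k - j - 1) : ℕ) : ℤ) := by
    rw [this]
    have e1 : ((n - 1 : ℕ) : ℤ) = (n : ℤ) - 1 := by omega
    push_cast [e1]
    ring
  exact_mod_cast goal
end

section
/- Let a be a real number with a ≠ 0 and a ≠ 1, and let n ≥ 2 be an integer. Then Σ_{k=0}^{n−1} (a/(a−1))^{n−2−k} · (1 − k/(a−1)) = (n−1) + (a−n)/a, where the exponent n−2−k is an integer (which equals −1 when k = n−1) and the power is taken as an integer power of the nonzero real number a/(a−1). -/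
/-- Auxiliary identity: for real `a ∉ {0,1}` and `n ≥ 2`,
`Σ_{k=0}^{n-1} (a/(a-1))^(n-2-k) (1 - k/(a-1)) = (n-1) + (a-n)/a`,
where the exponent `n-2-k` is an integer. -/
theorem auxiliary_identity_a (a : ℝ) (ha0 : a ≠ 0) (ha1 : a ≠ 1)
    (n : ℕ) (hn : 2 ≤ n) :
    ∑ k ∈ Finset.range n,
        (a / (a - 1)) ^ ((n : ℤ) - 2 - (k : ℤ)) * (1 - (k : ℝ) / (a - 1)) =
      ((n : ℝ) - 1) + (a - (n : ℝ)) / a := by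
  have ha1' : a - 1 ≠ 0 := sub_ne_zero.mpr ha1
  have hr : a / (a - 1) ≠ 0 := div_ne_zero ha0 ha1'
  induction n, hn using Nat.le_induction with
  | base =>
    rw [Finset.sum_range_succ, Finset.sum_range_one]
    push_cast
    norm_num
    field_simp
    ring
  | succ n hn ih =>
    rw [Finset.sum_range_succ]
    have key : ∀ k ∈ Finset.range n,
        (a / (a - 1)) ^ ((↑(n+1) : ℤ) - 2 - (k : ℤ)) * (1 - (k : ℝ) / (a - 1)) =
        (a / (a - 1)) * ((a / (a - 1)) ^ ((n : ℤ) - 2 - (k : ℤ)) * (1 - (k : ℝ) / (a - 1))) := by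
      intro k hk
      rw [show ((n+1:ℕ):ℤ) - 2 - (k:ℤ) = ((n:ℤ) - 2 - k) + 1 by push_cast; ring, zpow_add_one₀ hr]
      ring
    rw [Finset.sum_congr rfl key, ← Finset.mul_sum, ih]
    have hexp : (↑(n+1) : ℤ) - 2 - (n : ℤ) = -1 := by push_cast; ring
    rw [hexp, zpow_neg_one]
    have hn2 : (2:ℝ) ≤ (n:ℝ) := by exact_mod_cast hn
    push_cast
    field_simp
    ring
end

section
/- For every integer n ≥ 3, the following identity holds in the rational numbers: n − 2 = (n/(n−1))^{n−3} + Σ_{k=1}^{n−2} (n/(n−1))^{n−2−k} · ( (n−3−k)/(n−2) + (2nk+n−k−2)/(n(n−1)(n−2)) ), where n−3−k is computed in ℚ (it equals −1 when k = n−2) and all exponents are natural numbers. -/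
/-!
The summand's coefficient `c k` is of the form `f k - r f (k - 1)` with `r = n/(n-1)` and `f`
affine, `f k = ((n² - 3n + 1) k + (n - 1)(n - 2)) / (n(n - 2))`. Weighted by `r^(m-k)` the sum
therefore telescopes to `f m - r^m f 0`, and for `m = n - 2` this is `n - 2 - r^(n-3)`, because
`f (n - 2) = n - 2` and `r f 0 = 1`.
-/

theorem Finset.sum_Icc_pow_mul_eq_sub {R : Type*} [CommRing R] (r : R) (f c : ℕ → R)
    (hc : ∀ k, c (k + 1) = f (k + 1) - r * f k) (m : ℕ) :
    ∑ k ∈ Finset.Icc 1 m, r ^ (m - k) * c k = f m - r ^ m * f 0 := by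
  induction m with
  | zero => simp
  | succ m ih =>
    have hpow : ∀ k ∈ Finset.Icc 1 m, r ^ (m + 1 - k) * c k = r * (r ^ (m - k) * c k) := by
      intro k hk
      rw [Nat.sub_add_comm (Finset.mem_Icc.mp hk).2, pow_succ]
      ring
    rw [Finset.sum_Icc_succ_top (Nat.le_add_left 1 m), Finset.sum_congr rfl hpow,
      ← Finset.mul_sum, ih, hc, Nat.sub_self, pow_zero, pow_succ]
    ring

/-- `n-2 = (n/(n-1))^(n-3) + Σ_{k=1}^{n-2} (n/(n-1))^(n-2-k)
((n-3-k)/(n-2) + (2nk+n-k-2)/(n(n-1)(n-2)))` in `ℚ`. -/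
theorem identity_prop_Kn_minus_edge (n : ℕ) (hn : 3 ≤ n) :
    (n : ℚ) - 2 =
      ((n : ℚ) / ((n : ℚ) - 1)) ^ (n - 3) +
        ∑ k ∈ Finset.Icc 1 (n - 2),
          ((n : ℚ) / ((n : ℚ) - 1)) ^ (n - 2 - k) *
            (((n : ℚ) - 3 - (k : ℚ)) / ((n : ℚ) - 2) +
              (2 * (n : ℚ) * (k : ℚ) + (n : ℚ) - (k : ℚ) - 2) /
                ((n : ℚ) * ((n : ℚ) - 1) * ((n : ℚ) - 2))) := by
  have hn' : (3 : ℚ) ≤ n := by exact_mod_cast hn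
  have h0 : (n : ℚ) ≠ 0 := by linarith
  have h1 : (n : ℚ) - 1 ≠ 0 := by linarith
  have h2 : (n : ℚ) - 2 ≠ 0 := by linarith
  set r : ℚ := n / (n - 1)
  set f : ℕ → ℚ := fun k => ((n ^ 2 - 3 * n + 1) * k + (n - 1) * (n - 2)) / (n * (n - 2))
  rw [Finset.sum_Icc_pow_mul_eq_sub r f _ (fun k => by simp only [r, f]; push_cast; field_simp; ring)]
  obtain ⟨m, rfl⟩ : ∃ m, n = m + 3 := ⟨n - 3, by omega⟩
  simp only [r, f, Nat.add_sub_cancel, show m + 3 - 2 = m + 1 by omega, pow_succ]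
  push_cast at h0 h1 h2 ⊢
  field_simp
  ring
end

section
/- Let a be a real number with a ∉ {0, 1, 2}, and let n ≥ 3 be an integer. Then (a/(a−1))^{n−3} + Σ_{k=1}^{n−2} (a/(a−1))^{n−2−k} · ( (a−3−k)/(a−2) + (2ak+a−k−2)/(a(a−1)(a−2)) ) = (n−2) + ( 1 + (n−(n−1)a)/(a(a−2)) ), where all exponents are natural numbers. -/
/-! With `m = n - 2`, `r = a/(a-1)` and `c k` the bracketed coefficient, the left side
`x m = r^(m-1) + ∑_{k=1}^m r^(m-k) c k` is the solution of the first-order linear recurrence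
`x (m+1) = r x m + c (m+1)` with `x 1 = 1 + c 1`. The right side is affine in `m`, and it
satisfies the same recurrence and initial value by a rational-function identity in `a`. -/

open Finset

section LinearRecurrence

variable {R : Type*} [CommSemiring R]

theorem sum_Icc_pow_mul_succ (r : R) (c : ℕ → R) (m : ℕ) :
    ∑ k ∈ Icc 1 (m + 1), r ^ (m + 1 - k) * c k =
      r * ∑ k ∈ Icc 1 m, r ^ (m - k) * c k + c (m + 1) := by
  rw [sum_Icc_succ_top (by omega), Nat.sub_self, pow_zero, one_mul, mul_sum]
  congr 1
  refine sum_congr rfl fun k hk => ?_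
  rw [show m + 1 - k = m - k + 1 by grind, pow_succ', mul_assoc]

theorem pow_pred_add_sum_Icc_eq_of_recurrence (r : R) (c x : ℕ → R) (h_one : 1 + c 1 = x 1)
    (h_succ : ∀ m, 1 ≤ m → x (m + 1) = r * x m + c (m + 1)) (m : ℕ) (hm : 1 ≤ m) :
    r ^ (m - 1) + ∑ k ∈ Icc 1 m, r ^ (m - k) * c k = x m := by
  induction m, hm using Nat.le_induction with
  | base => simpa using h_one
  | succ m hm ih =>
    obtain ⟨j, rfl⟩ : ∃ j, m = j + 1 := ⟨m - 1, by omega⟩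
    rw [h_succ _ hm, ← ih, sum_Icc_pow_mul_succ]
    simp only [Nat.add_sub_cancel, pow_succ']
    ring

end LinearRecurrence

section AuxiliaryIdentity

variable (a : ℝ)

noncomputable def auxCoeff (k : ℕ) : ℝ :=
  (a - 3 - k) / (a - 2) + (2 * a * k + a - k - 2) / (a * (a - 1) * (a - 2))

noncomputable def auxClosedForm (m : ℕ) : ℝ :=
  m + 1 + (m + 2 - (m + 1) * a) / (a * (a - 2))

variable {a}

theorem one_add_auxCoeff_one (ha0 : a ≠ 0) (ha1 : a ≠ 1) (ha2 : a ≠ 2) :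
    1 + auxCoeff a 1 = auxClosedForm a 1 := by
  have h1 : a - 1 ≠ 0 := sub_ne_zero.mpr ha1
  have h2 : a - 2 ≠ 0 := sub_ne_zero.mpr ha2
  unfold auxCoeff auxClosedForm
  field_simp
  ring

theorem auxClosedForm_succ (ha0 : a ≠ 0) (ha1 : a ≠ 1) (ha2 : a ≠ 2) (m : ℕ) :
    auxClosedForm a (m + 1) = a / (a - 1) * auxClosedForm a m + auxCoeff a (m + 1) := by
  have h1 : a - 1 ≠ 0 := sub_ne_zero.mpr ha1
  have h2 : a - 2 ≠ 0 := sub_ne_zero.mpr ha2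
  unfold auxCoeff auxClosedForm
  push_cast
  field_simp
  ring

end AuxiliaryIdentity

/-- Auxiliary identity: for real `a ∉ {0,1,2}` and `n ≥ 3`,
`(a/(a-1))^(n-3) + Σ_{k=1}^{n-2} (a/(a-1))^(n-2-k)
((a-3-k)/(a-2) + (2ak+a-k-2)/(a(a-1)(a-2))) = (n-2) + (1 + (n-(n-1)a)/(a(a-2)))`. -/
theorem auxiliary_identity_a_Kn_minus_edge (a : ℝ)
    (ha0 : a ≠ 0) (ha1 : a ≠ 1) (ha2 : a ≠ 2) (n : ℕ) (hn : 3 ≤ n) :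
    (a / (a - 1)) ^ (n - 3) +
        ∑ k ∈ Finset.Icc 1 (n - 2),
          (a / (a - 1)) ^ (n - 2 - k) *
            ((a - 3 - (k : ℝ)) / (a - 2) +
              (2 * a * (k : ℝ) + a - (k : ℝ) - 2) / (a * (a - 1) * (a - 2))) =
      ((n : ℝ) - 2) + (1 + ((n : ℝ) - ((n : ℝ) - 1) * a) / (a * (a - 2))) := by
  obtain ⟨m, rfl⟩ : ∃ m, n = m + 2 := ⟨n - 2, by omega⟩
  have hm : 1 ≤ m := by omega
  rw [show m + 2 - 3 = m - 1 by omega, Nat.add_sub_cancel]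
  have h := pow_pred_add_sum_Icc_eq_of_recurrence (a / (a - 1)) (auxCoeff a) (auxClosedForm a)
    (one_add_auxCoeff_one ha0 ha1 ha2) (fun m _ => auxClosedForm_succ ha0 ha1 ha2 m) m hm
  unfold auxCoeff auxClosedForm at h
  rw [h]
  push_cast
  ring
end

section
/- For every integer n ≥ 3, the following identity holds in the rational numbers: (n−1)^{n−3} · (n−2)² = n^{n−3} · (n−2) + Σ_{k=1}^{n−2} n^{n−2−k} · (n−1)^{k−1} · ( (n−3−k) + (2nk+n−k−2)/(n(n−1)) ), where n−3−k is computed in ℚ (it equals −1 when k = n−2) and all exponents are natural numbers. -/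
/-- `(n-1)^(n-3) (n-2)^2 = n^(n-3) (n-2) + Σ_{k=1}^{n-2} n^(n-2-k) (n-1)^(k-1)
((n-3-k) + (2nk+n-k-2)/(n(n-1)))` in `ℚ`. -/
theorem uprooted_count_identity_Kn_minus_edge (n : ℕ) (hn : 3 ≤ n) :
    ((n : ℚ) - 1) ^ (n - 3) * ((n : ℚ) - 2) ^ 2 =
      (n : ℚ) ^ (n - 3) * ((n : ℚ) - 2) +
        ∑ k ∈ Finset.Icc 1 (n - 2),
          (n : ℚ) ^ (n - 2 - k) * ((n : ℚ) - 1) ^ (k - 1) *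
            (((n : ℚ) - 3 - (k : ℚ)) +
              (2 * (n : ℚ) * (k : ℚ) + (n : ℚ) - (k : ℚ) - 2) /
                ((n : ℚ) * ((n : ℚ) - 1))) := by
  obtain ⟨m, rfl⟩ : ∃ m, n = m + 3 := ⟨n - 3, by omega⟩
  clear hn
  set a : ℚ := ((m + 3 : ℕ) : ℚ) with ha_def
  have ha : a = (m : ℚ) + 3 := by push_cast [ha_def]; ring
  have hm0 : (0 : ℚ) ≤ (m : ℚ) := Nat.cast_nonneg m
  have ha0 : a ≠ 0 := by rw [ha]; intro h; linarith
  have hb0 : a - 1 ≠ 0 := by rw [ha]; intro h; linarith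
  set F : ℕ → ℚ := fun k =>
    a ^ (m + 1) * (a - 1) ^ k * ((-a ^ 2 + 3 * a - 1) * k - 1) / (a ^ k * (a - 1) ^ 2)
    with hF
  have hsub2 : m + 3 - 2 = m + 1 := rfl
  have hsub3 : m + 3 - 3 = m := rfl
  rw [hsub2, hsub3, show Finset.Icc 1 (m + 1) = Finset.Ico 1 (m + 2) from
    (Finset.Ico_add_one_right_eq_Icc 1 (m + 1)).symm, Finset.sum_Ico_eq_sum_range]
  have hrange : m + 2 - 1 = m + 1 := rfl
  rw [hrange]
  have hstep : ∀ i ∈ Finset.range (m + 1),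
      a ^ (m + 1 - (1 + i)) * (a - 1) ^ (1 + i - 1) *
        ((a - 3 - ((1 + i : ℕ) : ℚ)) +
          (2 * a * ((1 + i : ℕ) : ℚ) + a - ((1 + i : ℕ) : ℚ) - 2) / (a * (a - 1))) =
      F (i + 1) - F (i + 1 + 1) := by
    intro i hi
    have him : i ≤ m := by simpa using Nat.lt_succ_iff.mp (Finset.mem_range.mp hi)
    have h1 : 1 + i - 1 = i := by omega
    have h2 : m + 1 - (1 + i) = m - i := by omega
    rw [h1, h2, pow_sub₀ a ha0 him, hF]
    have hai : (a : ℚ) ^ i ≠ 0 := pow_ne_zero _ ha0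
    have ham : (a : ℚ) ^ m ≠ 0 := pow_ne_zero _ ha0
    push_cast
    field_simp
    ring
  rw [Finset.sum_congr rfl hstep, Finset.sum_range_sub' (fun i => F (i + 1)) (m + 1)]
  rw [hF]
  simp only
  have hm : (m : ℚ) = a - 3 := by rw [ha]; ring
  push_cast
  rw [hm]
  field_simp
  ring
end
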